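/- Let (X,τ) be a topological space, V = ⟨V_a⟩ an open Souslin scheme on (X,τ) that covers X, and f a selector on V. Then f : (ℕ^ℕ, σ_{τ,f}) → (X,τ) is a continuous open surjection. -/
import Mathlib


open Set Topology

namespace PiSpacePaper

/-- The restriction `p↾n` of `p : ℕ → ℕ`, as a list of length `n`. -/
def restrictSeq (p : ℕ → ℕ) (n : ℕ) : List ℕ := (List.range n).map p

/-- The basic clopen set `S_a` of the Baire space. -/
def cyl (a : List ℕ) : Set (ℕ → ℕ) := {p | restrictSeq p a.length = a}

/-- The fruit `⋂ n, V (p↾n)` of a branch `p` in a Souslin scheme `V`. -/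
def fruit {X : Type*} (V : List ℕ → Set X) (p : ℕ → ℕ) : Set X :=
  ⋂ n : ℕ, V (restrictSeq p n)

/-- A Souslin scheme `V` covers the set `s`. -/
def Covers {X : Type*} (V : List ℕ → Set X) (s : Set X) : Prop :=
  V [] = s ∧ ∀ a : List ℕ, V a = ⋃ n : ℕ, V (a ++ [n])

/-- A Souslin scheme `V` partitions the set `s`. -/
def Partitions {X : Type*} (V : List ℕ → Set X) (s : Set X) : Prop :=
  Covers V s ∧ ∀ (a : List ℕ) (n m : ℕ), n ≠ m → V (a ++ [n]) ∩ V (a ++ [m]) = ∅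

/-- A Souslin scheme is complete iff all fruits are nonempty. -/
def Complete {X : Type*} (V : List ℕ → Set X) : Prop :=
  ∀ p : ℕ → ℕ, (fruit V p).Nonempty

/-- A Souslin scheme has strict branches iff every fruit is a singleton. -/
def StrictBranches {X : Type*} (V : List ℕ → Set X) : Prop :=
  ∀ p : ℕ → ℕ, ∃ x : X, fruit V p = {x}

/-- A Souslin scheme is open iff all its members are open sets. -/
def OpenScheme {X : Type*} [TopologicalSpace X] (V : List ℕ → Set X) : Prop :=
  ∀ a : List ℕ, IsOpen (V a)

/-- `flesh V = ⋃ a, V a`. -/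
def flesh {X : Type*} (V : List ℕ → Set X) : Set X := ⋃ a : List ℕ, V a

/-- `branches V x = {q ∈ ℕ^ℕ : x ∈ fruit V q}`. -/
def branches {X : Type*} (V : List ℕ → Set X) (x : X) : Set (ℕ → ℕ) :=
  {q | x ∈ fruit V q}

/-- A family `γ` of subsets is a π-net for a space: all members are nonempty and every
nonempty open set contains a member. -/
def IsPiNet {X : Type*} [TopologicalSpace X] (γ : Set (Set X)) : Prop :=
  (∀ G ∈ γ, G.Nonempty) ∧
  ∀ U : Set X, IsOpen U → U.Nonempty → ∃ G ∈ γ, G ⊆ U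

/-- A family `γ` of subsets is a π-base for a space: all members are nonempty open sets
and every nonempty open set contains a member. -/
def IsPiBase {X : Type*} [TopologicalSpace X] (γ : Set (Set X)) : Prop :=
  (∀ G ∈ γ, IsOpen G ∧ G.Nonempty) ∧
  ∀ U : Set X, IsOpen U → U.Nonempty → ∃ G ∈ γ, G ⊆ U

/-- A π-space: there is an open Souslin scheme that partitions the space, has strict
branches, and whose family of members is a π-base. -/
def IsPiSpace (X : Type*) [TopologicalSpace X] : Prop :=
  ∃ V : List ℕ → Set X, OpenScheme V ∧ Partitions V Set.univ ∧ StrictBranches V ∧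
    IsPiBase {S : Set X | ∃ a : List ℕ, S = V a}

/-- A Lusin π-base for a space. -/
def IsLusinPiBase {X : Type*} [TopologicalSpace X] (V : List ℕ → Set X) : Prop :=
  OpenScheme V ∧ Partitions V Set.univ ∧ StrictBranches V ∧
  ∀ (x : X) (U : Set X), IsOpen U → x ∈ U →
    ∃ (a : List ℕ) (n : ℕ), x ∈ V a ∧ (⋃ i : ℕ, ⋃ _ : n ≤ i, V (a ++ [i])) ⊆ U

/-- A map is quasi-open iff the image of every nonempty open set has nonempty interior. -/
def IsQuasiOpen {X Y : Type*} [TopologicalSpace X] [TopologicalSpace Y] (f : X → Y) : Prop :=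
  ∀ U : Set X, IsOpen U → U.Nonempty → (interior (f '' U)).Nonempty

/-- A π-net Souslin scheme on a space `X`: for every finite sequence `a`, the family
`{V b : b ⊒ a}` is a π-net for the subspace `V a` of `X` (whose nonempty open sets are
exactly the nonempty sets `U ∩ V a` with `U` open in `X`). -/
def IsPiNetScheme {X : Type*} [TopologicalSpace X] (V : List ℕ → Set X) : Prop :=
  ∀ a : List ℕ,
    (∀ b : List ℕ, a <+: b → (V b).Nonempty) ∧
    ∀ U : Set X, IsOpen U → (U ∩ V a).Nonempty → ∃ b : List ℕ, a <+: b ∧ V b ⊆ U ∩ V a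

/-- A π-base Souslin scheme on a space is an open π-net Souslin scheme. -/
def IsPiBaseScheme {X : Type*} [TopologicalSpace X] (V : List ℕ → Set X) : Prop :=
  OpenScheme V ∧ IsPiNetScheme V

/-- A selector on a Souslin scheme `V`: a surjection of the Baire space onto `flesh V`
such that every fiber `f⁻¹(x)` is a dense subset of the subspace `branches V x` of the
Baire space. -/
def IsSelector {X : Type*} (V : List ℕ → Set X) (f : (ℕ → ℕ) → X) : Prop :=
  Set.range f = flesh V ∧
  ∀ x ∈ flesh V, f ⁻¹' {x} ⊆ branches V x ∧ branches V x ⊆ closure (f ⁻¹' {x})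

/-- The topology `σ_{τ,f}` on the Baire space, generated by the subbase consisting of the
`τ`-preimages under `f` together with the basic sets `S_a`. -/
def sigmaTop {X : Type*} [TopologicalSpace X] (f : (ℕ → ℕ) → X) :
    TopologicalSpace (ℕ → ℕ) :=
  TopologicalSpace.generateFrom
    ({S : Set (ℕ → ℕ) | ∃ U : Set X, IsOpen U ∧ S = f ⁻¹' U} ∪
      {S : Set (ℕ → ℕ) | ∃ a : List ℕ, S = cyl a})

/-- The Souslin scheme `V^g`, where `V^g_a = V_{g ∘ a}`. -/
def schemeComp {X : Type*} (V : List ℕ → Set X) (g : ℕ → ℕ) : List ℕ → Set X :=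
  fun a => V (a.map g)

/-- A subset of the Baire space is dense-in-itself iff it has no isolated points. -/
def DenseInItself (B : Set (ℕ → ℕ)) : Prop :=
  ∀ q ∈ B, q ∈ closure (B \ {q})

/-- `X` is a continuous open image of a π-space. -/
def IsContinuousOpenImageOfPiSpace (X : Type) [TopologicalSpace X] : Prop :=
  ∃ (Y : Type) (_ : TopologicalSpace Y) (f : Y → X),
    IsPiSpace Y ∧ Continuous f ∧ IsOpenMap f ∧ Function.Surjective f

/-- The topology `τ_N` on the Baire space generated by the sets `U \ A` with `U` open in
the Baire space and `A` nowhere dense in the Baire space. -/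
def tauN : TopologicalSpace (ℕ → ℕ) :=
  TopologicalSpace.generateFrom
    {S : Set (ℕ → ℕ) | ∃ U A : Set (ℕ → ℕ), IsOpen U ∧ IsNowhereDense A ∧ S = U \ A}

section Aux

lemma restrictSeq_length (p : ℕ → ℕ) (n : ℕ) : (restrictSeq p n).length = n := by
  simp [restrictSeq]

lemma restrictSeq_getElem (p : ℕ → ℕ) {n i : ℕ} (h : i < n) :
    (restrictSeq p n)[i]'(by simpa [restrictSeq_length] using h) = p i := by
  simp [restrictSeq]

lemma mem_cyl_iff {p : ℕ → ℕ} {a : List ℕ} :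
    p ∈ cyl a ↔ ∀ i (h : i < a.length), p i = a[i] := by
  constructor
  · intro hp i h
    have hp' : restrictSeq p a.length = a := hp
    have h2 := List.getElem_of_eq hp' (i := i) (by simpa [restrictSeq_length] using h)
    simpa [restrictSeq] using h2
  · intro h
    apply List.ext_getElem (by simp [restrictSeq_length])
    intro i h1 h2
    simp only [restrictSeq, List.getElem_map, List.getElem_range]
    exact h i h2

lemma isOpen_cyl (a : List ℕ) : IsOpen (cyl a) := by
  have : cyl a = ⋂ i ∈ Finset.range a.length, (fun p : ℕ → ℕ => p i) ⁻¹' {a.getD i 0} := by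
    ext p
    simp only [mem_cyl_iff, Set.mem_iInter, Finset.mem_range, Set.mem_preimage,
      Set.mem_singleton_iff]
    constructor
    · intro h i hi
      rw [List.getD_eq_getElem a 0 hi]; exact h i hi
    · intro h i hi
      rw [← List.getD_eq_getElem a 0 hi]; exact h i hi
  rw [this]
  exact isOpen_biInter_finset fun i _ => (continuous_apply i).isOpen_preimage _ (isOpen_discrete _)

lemma mem_cyl_self (p : ℕ → ℕ) (n : ℕ) : p ∈ cyl (restrictSeq p n) := by
  rw [mem_cyl_iff]
  intro i h
  simp [restrictSeq]

lemma cyl_mono (p : ℕ → ℕ) {m n : ℕ} (h : m ≤ n) :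
    cyl (restrictSeq p n) ⊆ cyl (restrictSeq p m) := by
  intro q hq
  rw [mem_cyl_iff] at hq ⊢
  intro i hi
  rw [restrictSeq_length] at hi
  have := hq i (by simpa [restrictSeq_length] using lt_of_lt_of_le hi h)
  simp only [restrictSeq, List.getElem_map, List.getElem_range] at this ⊢
  exact this

lemma V_mono_prefix {X : Type*} {V : List ℕ → Set X} (hcov : Covers V Set.univ)
    {b c : List ℕ} (h : b <+: c) : V c ⊆ V b := by
  obtain ⟨t, rfl⟩ := h
  induction t using List.reverseRecOn with
  | nil => simp
  | append_singleton s m ih =>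
    intro x hx
    apply ih
    rw [hcov.2 (b ++ s)]
    rw [← List.append_assoc] at hx
    exact Set.mem_iUnion.mpr ⟨m, hx⟩

lemma flesh_univ {X : Type*} {V : List ℕ → Set X} (hcov : Covers V Set.univ) :
    flesh V = Set.univ :=
  Set.eq_univ_of_univ_subset (hcov.1 ▸ Set.subset_iUnion V [])

lemma exists_branch {X : Type*} {V : List ℕ → Set X} (hcov : Covers V Set.univ)
    {x : X} {a : List ℕ} (hx : x ∈ V a) :
    ∃ q : ℕ → ℕ, restrictSeq q a.length = a ∧ ∀ n, x ∈ V (restrictSeq q n) := by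
  have hstep : ∀ l : List ℕ, ∃ m, x ∈ V l → x ∈ V (l ++ [m]) := by
    intro l
    by_cases h : x ∈ V l
    · rw [hcov.2 l] at h
      obtain ⟨m, hm⟩ := Set.mem_iUnion.mp h
      exact ⟨m, fun _ => hm⟩
    · exact ⟨0, fun h' => absurd h' h⟩
  choose g hg using hstep
  set c : ℕ → List ℕ := fun n => Nat.rec a (fun _ l => l ++ [g l]) n with hc
  have hcs : ∀ n, c (n + 1) = c n ++ [g (c n)] := fun n => rfl
  have hxc : ∀ n, x ∈ V (c n) := by
    intro n
    induction n with
    | zero => exact hx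
    | succ n ih => rw [hcs]; exact hg (c n) ih
  have hlen : ∀ n, (c n).length = a.length + n := by
    intro n
    induction n with
    | zero => simp [hc]
    | succ n ih => rw [hcs]; simp [ih]; omega
  have hpre : ∀ m n, m ≤ n → c m <+: c n := by
    intro m n h
    induction n with
    | zero => rw [Nat.le_zero.mp h]
    | succ n ih =>
      rcases Nat.lt_or_ge m (n + 1) with h' | h'
      · exact (ih (Nat.lt_succ_iff.mp h')).trans (by rw [hcs]; exact List.prefix_append _ _)
      · rw [Nat.le_antisymm h h']
  set q : ℕ → ℕ := fun k => (c (k + 1)).getD k 0 with hqdef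
  have hqk : ∀ k n, k < n → q k = (c n).getD k 0 := by
    intro k n hk
    have h1 := hlen (k + 1)
    have h2 := hlen n
    have hkl : k < (c (k + 1)).length := by omega
    have hkn : k < (c n).length := by omega
    show (c (k + 1)).getD k 0 = (c n).getD k 0
    rw [List.getD_eq_getElem _ 0 hkl, List.getD_eq_getElem _ 0 hkn]
    exact (hpre (k + 1) n hk).getElem hkl
  have key : ∀ n, restrictSeq q n = (c n).take n := by
    intro n
    have h2 := hlen n
    apply List.ext_getElem
    · rw [restrictSeq_length, List.length_take]; omega
    · intro i h1 h3
      have hin : i < n := by simpa [restrictSeq_length] using h1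
      have hicn : i < (c n).length := by omega
      simp only [restrictSeq, List.getElem_map, List.getElem_range, List.getElem_take]
      rw [hqk i n hin, List.getD_eq_getElem _ 0 hicn]
  refine ⟨q, ?_, ?_⟩
  · rw [key]
    have : a <+: c a.length := hpre 0 a.length (Nat.zero_le _)
    obtain ⟨t, ht⟩ := this
    rw [← ht, List.take_left]
  · intro n
    rw [key]
    exact V_mono_prefix hcov (List.take_prefix _ _) (hxc n)

lemma subset_image {X : Type*} [TopologicalSpace X] {V : List ℕ → Set X}
    {f : (ℕ → ℕ) → X} (hcov : Covers V Set.univ) (hf : IsSelector V f)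
    (U : Set X) (a : List ℕ) :
    U ∩ V a ⊆ f '' (f ⁻¹' U ∩ cyl a) := by
  rintro y ⟨hyU, hyV⟩
  obtain ⟨q, hq1, hq2⟩ := exists_branch hcov hyV
  have hyfl : y ∈ flesh V := Set.mem_iUnion.mpr ⟨a, hyV⟩
  have hqb : q ∈ branches V y := Set.mem_iInter.mpr hq2
  have hcl := (hf.2 y hyfl).2 hqb
  rw [mem_closure_iff] at hcl
  obtain ⟨p, hpc, hpf⟩ := hcl (cyl a) (isOpen_cyl a) hq1
  have hfp : f p = y := hpf
  exact ⟨p, ⟨by rw [Set.mem_preimage, hfp]; exact hyU, hpc⟩, hfp⟩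

lemma image_mem_V {X : Type*} [TopologicalSpace X] {V : List ℕ → Set X}
    {f : (ℕ → ℕ) → X} (hf : IsSelector V f) (hfl : flesh V = Set.univ)
    {p : ℕ → ℕ} {a : List ℕ} (hp : p ∈ cyl a) : f p ∈ V a := by
  have h1 : p ∈ branches V (f p) := (hf.2 (f p) (by rw [hfl]; trivial)).1 rfl
  have h2 : f p ∈ V (restrictSeq p a.length) := Set.mem_iInter.mp h1 a.length
  rwa [show restrictSeq p a.length = a from hp] at h2

lemma shrink {X : Type*} [TopologicalSpace X] (f : (ℕ → ℕ) → X) {W : Set (ℕ → ℕ)}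
    (hW : TopologicalSpace.GenerateOpen
      ({S : Set (ℕ → ℕ) | ∃ U : Set X, IsOpen U ∧ S = f ⁻¹' U} ∪
        {S : Set (ℕ → ℕ) | ∃ a : List ℕ, S = cyl a}) W) :
    ∀ p ∈ W, ∃ (U : Set X) (n : ℕ), IsOpen U ∧ f p ∈ U ∧
      f ⁻¹' U ∩ cyl (restrictSeq p n) ⊆ W := by
  induction hW with
  | basic s hs =>
    rcases hs with ⟨U, hU, rfl⟩ | ⟨a, rfl⟩
    · exact fun p hp => ⟨U, 0, hU, hp, fun q hq => hq.1⟩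
    · intro p hp
      refine ⟨Set.univ, a.length, isOpen_univ, Set.mem_univ _, ?_⟩
      rw [show restrictSeq p a.length = a from hp]
      exact fun q hq => hq.2
  | univ => exact fun p _ => ⟨Set.univ, 0, isOpen_univ, Set.mem_univ _, fun _ _ => Set.mem_univ _⟩
  | inter s t hs ht ihs iht =>
    intro p hp
    obtain ⟨U1, n1, h1, hm1, hs1⟩ := ihs p hp.1
    obtain ⟨U2, n2, h2, hm2, hs2⟩ := iht p hp.2
    exact ⟨U1 ∩ U2, max n1 n2, h1.inter h2, ⟨hm1, hm2⟩,
      fun q hq => ⟨hs1 ⟨hq.1.1, cyl_mono p (le_max_left _ _) hq.2⟩,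
                   hs2 ⟨hq.1.2, cyl_mono p (le_max_right _ _) hq.2⟩⟩⟩
  | sUnion ts hts ih =>
    rintro p ⟨t, htm, hpt⟩
    obtain ⟨U, n, hU, hm, hsub⟩ := ih t htm p hpt
    exact ⟨U, n, hU, hm, fun q hq => ⟨t, htm, hsub hq⟩⟩

end Aux

/-- If V is an open Souslin scheme on (X,τ) covering X and f is a selector
on V, then f : (ℕ^ℕ, σ_{τ,f}) → (X,τ) is a continuous open surjection. -/
theorem statement13 {X : Type} [tX : TopologicalSpace X] (V : List ℕ → Set X)
    (hopen : OpenScheme V) (hcov : Covers V Set.univ)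
    (f : (ℕ → ℕ) → X) (hf : IsSelector V f) :
    Continuous[sigmaTop f, tX] f ∧
    (@IsOpenMap (ℕ → ℕ) X (sigmaTop f) tX f) ∧
    Function.Surjective f := by
  have hfl : flesh V = Set.univ := flesh_univ hcov
  have hsurj : Function.Surjective f := by
    rw [← Set.range_eq_univ, hf.1, hfl]
  refine ⟨?_, ?_, hsurj⟩
  · refine continuous_def.mpr fun U hU => ?_
    exact TopologicalSpace.isOpen_generateFrom_of_mem (Or.inl ⟨U, hU, rfl⟩)
  · intro W hW
    rw [isOpen_iff_forall_mem_open]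
    rintro x ⟨p, hpW, rfl⟩
    obtain ⟨U, n, hU, hm, hsub⟩ := shrink f hW p hpW
    refine ⟨U ∩ V (restrictSeq p n), ?_, hU.inter (hopen _),
      hm, image_mem_V hf hfl (mem_cyl_self p n)⟩
    intro y hy
    obtain ⟨r, hr, hry⟩ := subset_image hcov hf U (restrictSeq p n) hy
    exact ⟨r, hsub hr, hry⟩
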